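/- arXiv:2510.14699 — 11 statements merged into one kernel-verified Lean document; each statement's English description precedes it below -/
import Mathlib

section
/- Let (a, τ) be a timed word, let b1, b2 be atomic propositions, and let b, c ∈ ℕ with b < c, and let I ⊆ ℝ satisfy Set.Ioo (b:ℝ) c ⊆ I ⊆ Set.Icc (b:ℝ) c and 0 ∉ I. Then for every position i, position i satisfies b1 S_I b2 if and only if there exists a (b,c,I)-block decomposition m, i_1 ≤ i'_1 < i_2 ≤ i'_2 < … < i_m ≤ i'_m ≤ i at position i such that τ i − τ (i_1) ∈ I or τ i − τ (i'_1) ∈ I. -/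
/-- Lower-bound predicate for an interval `I` with natural lower endpoint `b`. -/
def LB (b : ℕ) (I : Set ℝ) (x : ℝ) : Prop :=
  ((b : ℝ) ∈ I ∧ (b : ℝ) ≤ x) ∨ ((b : ℝ) ∉ I ∧ (b : ℝ) < x)

/-- A `(b,c,I)`-block decomposition at position `i` of the timed word `(a, τ)`
for propositions `b1, b2`, with `m ≥ 1` blocks whose left/right endpoints are
`e 1 ≤ e' 1 < e 2 ≤ e' 2 < ⋯ < e m ≤ e' m ≤ i`. -/
def BlockDecomp {P : Type*} (a : ℕ → Set P) (τ : ℕ → ℝ) (b1 b2 : P)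
    (b c : ℕ) (I : Set ℝ) (i m : ℕ) (e e' : ℕ → ℕ) : Prop :=
  1 ≤ m ∧
  (∀ l, 1 ≤ l → l ≤ m → e l ≤ e' l) ∧
  (∀ l, 1 ≤ l → l < m → e' l < e (l + 1)) ∧
  e' m ≤ i ∧
  -- (a)
  (∀ k, e 1 < k → k ≤ i → b1 ∈ a k) ∧
  -- (b)
  (∀ l, 1 ≤ l → l ≤ m → b2 ∈ a (e l) ∧ b2 ∈ a (e' l)) ∧
  -- (c)
  (∀ l, 1 ≤ l → l < m → ∀ k, e' l < k → k < e (l + 1) → b2 ∉ a k) ∧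
  (∀ k, e' m < k → k ≤ i → b2 ∉ a k) ∧
  -- (d)
  (∀ l, 1 ≤ l → l ≤ m → τ (e' l) - τ (e l) < (c : ℝ) - (b : ℝ)) ∧
  -- (e)
  (∀ l, 1 ≤ l → l < m → (c : ℝ) - (b : ℝ) ≤ τ (e (l + 1)) - τ (e l)) ∧
  -- (f)
  (LB b I (τ i - τ (e 1)) ∨
    IsLeast {j | j ≤ i ∧ b2 ∈ a j ∧ ∀ k, j < k → k ≤ i → b1 ∈ a k} (e 1)) ∧
  -- (g)
  (1 < m → ¬ LB b I (τ i - τ (e 2)))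

open Classical in
/-- Right endpoint of the block starting at `s`: the largest `k ≤ i` that carries `b2`
and lies within time `d` of `s`. -/
noncomputable def blockE' {P : Type*} (a : ℕ → Set P) (τ : ℕ → ℝ) (b2 : P) (d : ℝ)
    (i s : ℕ) : ℕ :=
  Nat.findGreatest (fun k => s ≤ k ∧ b2 ∈ a k ∧ τ k - τ s < d) i

open Classical in
/-- The sequence of left endpoints of blocks, starting from `j0`. -/
noncomputable def blockG {P : Type*} (a : ℕ → Set P) (τ : ℕ → ℝ) (b2 : P) (d : ℝ)
    (i j0 : ℕ) : ℕ → ℕ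
  | 0 => j0
  | n + 1 =>
      if h : ∃ k, blockE' a τ b2 d i (blockG a τ b2 d i j0 n) < k ∧ k ≤ i ∧ b2 ∈ a k then
        Nat.find h
      else blockG a τ b2 d i j0 n

open Classical in
lemma blockG_succ_pos {P : Type*} {a : ℕ → Set P} {τ : ℕ → ℝ} {b2 : P} {d : ℝ} {i j0 n : ℕ}
    (h : ∃ k, blockE' a τ b2 d i (blockG a τ b2 d i j0 n) < k ∧ k ≤ i ∧ b2 ∈ a k) :
    blockG a τ b2 d i j0 (n + 1) = Nat.find h := by
  rw [blockG, dif_pos h]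

open Classical in
lemma blockG_succ_neg {P : Type*} {a : ℕ → Set P} {τ : ℕ → ℝ} {b2 : P} {d : ℝ} {i j0 n : ℕ}
    (h : ¬ ∃ k, blockE' a τ b2 d i (blockG a τ b2 d i j0 n) < k ∧ k ≤ i ∧ b2 ∈ a k) :
    blockG a τ b2 d i j0 (n + 1) = blockG a τ b2 d i j0 n := by
  rw [blockG, dif_neg h]

theorem since_iff_blockDecomp {P : Type*} (a : ℕ → Set P) (τ : ℕ → ℝ)
    (h0 : 0 ≤ τ 0) (hmono : ∀ n, τ n ≤ τ (n + 1))
    (b1 b2 : P) (b c : ℕ) (hbc : b < c) (I : Set ℝ)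
    (hI1 : Set.Ioo (b : ℝ) (c : ℝ) ⊆ I) (hI2 : I ⊆ Set.Icc (b : ℝ) (c : ℝ))
    (hI0 : (0 : ℝ) ∉ I) (i : ℕ) :
    (∃ j ≤ i, b2 ∈ a j ∧ τ i - τ j ∈ I ∧ ∀ k, j < k → k ≤ i → b1 ∈ a k) ↔
      (∃ m e e', BlockDecomp a τ b1 b2 b c I i m e e' ∧
        (τ i - τ (e 1) ∈ I ∨ τ i - τ (e' 1) ∈ I)) := by
  classical
  have hbcR : (b : ℝ) < (c : ℝ) := by exact_mod_cast hbc
  have hd0 : (0 : ℝ) < (c : ℝ) - (b : ℝ) := by linarith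
  constructor
  · rintro ⟨j, hji, hj2, hjI, hj1⟩
    have hLB : ∀ x, x ∈ I → LB b I x := by
      intro x hx
      by_cases hbI : (b : ℝ) ∈ I
      · exact Or.inl ⟨hbI, (hI2 hx).1⟩
      · exact Or.inr ⟨hbI, lt_of_le_of_ne (hI2 hx).1 fun h => hbI (by rw [h]; exact hx)⟩
    set Q : ℕ → Prop := fun j => b2 ∈ a j ∧ τ i - τ j ∈ I ∧ ∀ k, j < k → k ≤ i → b1 ∈ a k
      with hQdef
    have hQj : Q j := ⟨hj2, hjI, hj1⟩
    set j0 : ℕ := Nat.findGreatest Q i with hj0def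
    have hQj0 : Q j0 := Nat.findGreatest_spec hji hQj
    have hj0i : j0 ≤ i := Nat.findGreatest_le i
    have hj0max : ∀ k, j0 < k → k ≤ i → ¬ Q k := fun k hk hki =>
      Nat.findGreatest_is_greatest hk hki
    -- specification of blockE'
    have hE'spec : ∀ s, s ≤ i → b2 ∈ a s →
        s ≤ blockE' a τ b2 ((c : ℝ) - b) i s ∧
        b2 ∈ a (blockE' a τ b2 ((c : ℝ) - b) i s) ∧
        τ (blockE' a τ b2 ((c : ℝ) - b) i s) - τ s < (c : ℝ) - b ∧
        blockE' a τ b2 ((c : ℝ) - b) i s ≤ i := by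
      intro s hsi hs
      have hps : s ≤ s ∧ b2 ∈ a s ∧ τ s - τ s < (c : ℝ) - b :=
        ⟨le_rfl, hs, by rw [sub_self]; exact hd0⟩
      have h1 := Nat.findGreatest_spec (P := fun k => s ≤ k ∧ b2 ∈ a k ∧ τ k - τ s < (c : ℝ) - b)
        hsi hps
      have h2 := Nat.le_findGreatest (P := fun k => s ≤ k ∧ b2 ∈ a k ∧ τ k - τ s < (c : ℝ) - b)
        hsi hps
      have h3 := Nat.findGreatest_le (P := fun k => s ≤ k ∧ b2 ∈ a k ∧ τ k - τ s < (c : ℝ) - b) i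
      exact ⟨h2, h1.2.1, h1.2.2, h3⟩
    have hE'max : ∀ s k, s ≤ i → b2 ∈ a s → blockE' a τ b2 ((c : ℝ) - b) i s < k → k ≤ i →
        b2 ∈ a k → (c : ℝ) - b ≤ τ k - τ s := by
      intro s k hsi hs hlt hki hk
      have h := Nat.findGreatest_is_greatest
        (P := fun k => s ≤ k ∧ b2 ∈ a k ∧ τ k - τ s < (c : ℝ) - b) hlt hki
      have hsk : s ≤ k := le_trans (hE'spec s hsi hs).1 (le_of_lt hlt)
      by_contra hcon
      push_neg at hcon
      exact h ⟨hsk, hk, hcon⟩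
    -- invariant of the sequence
    have hInv : ∀ n, j0 ≤ blockG a τ b2 ((c : ℝ) - b) i j0 n ∧
        blockG a τ b2 ((c : ℝ) - b) i j0 n ≤ i ∧
        b2 ∈ a (blockG a τ b2 ((c : ℝ) - b) i j0 n) := by
      intro n
      induction n with
      | zero => exact ⟨le_rfl, hj0i, hQj0.1⟩
      | succ n ih =>
        by_cases h : ∃ k, blockE' a τ b2 ((c : ℝ) - b) i
            (blockG a τ b2 ((c : ℝ) - b) i j0 n) < k ∧ k ≤ i ∧ b2 ∈ a k
        · rw [blockG_succ_pos h]
          have hf := Nat.find_spec h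
          have hge := (hE'spec _ ih.2.1 ih.2.2).1
          exact ⟨by omega, hf.2.1, hf.2.2⟩
        · rw [blockG_succ_neg h]; exact ih
    -- the process terminates
    have hgrow : ∀ n, (∀ k, k < n → ∃ x, blockE' a τ b2 ((c : ℝ) - b) i
          (blockG a τ b2 ((c : ℝ) - b) i j0 k) < x ∧ x ≤ i ∧ b2 ∈ a x) →
        j0 + n ≤ blockG a τ b2 ((c : ℝ) - b) i j0 n := by
      intro n
      induction n with
      | zero => intro _; simp [blockG]
      | succ n ih =>
        intro h
        have hn := h n (Nat.lt_succ_self n)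
        rw [blockG_succ_pos hn]
        have h1 := (Nat.find_spec hn).1
        have h2 := (hE'spec _ (hInv n).2.1 (hInv n).2.2).1
        have h3 := ih fun k hk => h k (by omega)
        omega
    have hstop : ∃ n, ¬ ∃ k, blockE' a τ b2 ((c : ℝ) - b) i
        (blockG a τ b2 ((c : ℝ) - b) i j0 n) < k ∧ k ≤ i ∧ b2 ∈ a k := by
      by_contra hcon
      push_neg at hcon
      have h1 := hgrow (i + 1) fun k _ => hcon k
      have h2 := (hInv (i + 1)).2.1
      omega
    set N : ℕ := Nat.find hstop with hNdef
    have hNstop : ¬ ∃ k, blockE' a τ b2 ((c : ℝ) - b) i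
        (blockG a τ b2 ((c : ℝ) - b) i j0 N) < k ∧ k ≤ i ∧ b2 ∈ a k := Nat.find_spec hstop
    have hNmin : ∀ n, n < N → ∃ k, blockE' a τ b2 ((c : ℝ) - b) i
        (blockG a τ b2 ((c : ℝ) - b) i j0 n) < k ∧ k ≤ i ∧ b2 ∈ a k :=
      fun n hn => not_not.mp (Nat.find_min hstop hn)
    have hg0 : blockG a τ b2 ((c : ℝ) - b) i j0 (1 - 1) = j0 := rfl
    refine ⟨N + 1, fun l => blockG a τ b2 ((c : ℝ) - b) i j0 (l - 1),
      fun l => blockE' a τ b2 ((c : ℝ) - b) i (blockG a τ b2 ((c : ℝ) - b) i j0 (l - 1)),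
      ⟨?_, ?_, ?_, ?_, ?_, ?_, ?_, ?_, ?_, ?_, ?_, ?_⟩, Or.inl ?_⟩
    · beta_reduce
      omega
    · beta_reduce
      intro l h1 h2
      exact (hE'spec _ (hInv (l - 1)).2.1 (hInv (l - 1)).2.2).1
    · beta_reduce
      intro l h1 h2
      have hl : l - 1 < N := by omega
      have hx := hNmin (l - 1) hl
      have hrw : l + 1 - 1 = (l - 1) + 1 := by omega
      rw [hrw, blockG_succ_pos hx]
      exact (Nat.find_spec hx).1
    · beta_reduce
      have hrw : N + 1 - 1 = N := by omega
      rw [hrw]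
      exact (hE'spec _ (hInv N).2.1 (hInv N).2.2).2.2.2
    · beta_reduce
      intro k hk hki
      rw [hg0] at hk
      exact hQj0.2.2 k hk hki
    · beta_reduce
      intro l h1 h2
      exact ⟨(hInv (l - 1)).2.2, (hE'spec _ (hInv (l - 1)).2.1 (hInv (l - 1)).2.2).2.1⟩
    · beta_reduce
      intro l h1 h2 k hk1 hk2
      have hl : l - 1 < N := by omega
      have hx := hNmin (l - 1) hl
      have hrw : l + 1 - 1 = (l - 1) + 1 := by omega
      rw [hrw, blockG_succ_pos hx] at hk2
      have hki : k ≤ i := by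
        have := (Nat.find_spec hx).2.1
        omega
      intro hb2k
      exact Nat.find_min hx hk2 ⟨hk1, hki, hb2k⟩
    · beta_reduce
      have hrw : N + 1 - 1 = N := by omega
      rw [hrw]
      intro k h1 h2 hb2k
      exact hNstop ⟨k, h1, h2, hb2k⟩
    · beta_reduce
      intro l h1 h2
      exact (hE'spec _ (hInv (l - 1)).2.1 (hInv (l - 1)).2.2).2.2.1
    · beta_reduce
      intro l h1 h2
      have hl : l - 1 < N := by omega
      have hx := hNmin (l - 1) hl
      have hrw : l + 1 - 1 = (l - 1) + 1 := by omega
      rw [hrw, blockG_succ_pos hx]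
      have hspec := Nat.find_spec hx
      exact hE'max _ _ (hInv (l - 1)).2.1 (hInv (l - 1)).2.2 hspec.1 hspec.2.1 hspec.2.2
    · beta_reduce
      rw [hg0]
      exact Or.inl (hLB _ hQj0.2.1)
    · beta_reduce
      intro hm
      have h01 : 0 < N := by omega
      have hx := hNmin 0 h01
      have hg1 : blockG a τ b2 ((c : ℝ) - b) i j0 (2 - 1) = Nat.find hx := blockG_succ_pos hx
      rw [hg1]
      have hspec := Nat.find_spec hx
      have hstep : (c : ℝ) - b ≤ τ (Nat.find hx) - τ j0 :=
        hE'max j0 (Nat.find hx) (hInv 0).2.1 (hInv 0).2.2 hspec.1 hspec.2.1 hspec.2.2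
      have hic : τ i - τ j0 ≤ (c : ℝ) := (hI2 hQj0.2.1).2
      have hxb : τ i - τ (Nat.find hx) ≤ (b : ℝ) := by linarith
      have hj0lt : j0 < Nat.find hx := by
        have h1 := (hE'spec j0 hj0i hQj0.1).1
        have h2 : blockE' a τ b2 ((c : ℝ) - b) i j0 < Nat.find hx := hspec.1
        omega
      rintro (⟨hbI, hble⟩ | ⟨_, hblt⟩)
      · have heq : τ i - τ (Nat.find hx) = (b : ℝ) := le_antisymm hxb hble
        refine hj0max (Nat.find hx) hj0lt hspec.2.1 ⟨hspec.2.2, ?_, ?_⟩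
        · rw [heq]; exact hbI
        · intro k hk hki
          exact hQj0.2.2 k (by omega) hki
      · linarith
    · beta_reduce
      rw [hg0]
      exact hQj0.2.1
  · rintro ⟨m, e, e', hBD, hmem⟩
    obtain ⟨hm, hee', he'e, he'mi, ha, hb, hc1, hc2, hd, he, hf, hg⟩ := hBD
    have hchain : ∀ dl, 1 + dl ≤ m → e' 1 ≤ e' (1 + dl) := by
      intro dl
      induction dl with
      | zero => intro _; exact le_rfl
      | succ dl ih =>
        intro hdl
        have hidx : 1 + (dl + 1) = 1 + dl + 1 := by omega
        rw [hidx]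
        have h1 : 1 + dl ≤ m := by omega
        have h2 : 1 + dl < m := by omega
        have h3 := he'e (1 + dl) (by omega) h2
        have h4 := hee' (1 + dl + 1) (by omega) (by omega)
        have h5 := ih h1
        omega
    have he'1i : e' 1 ≤ i := by
      have h1 := hchain (m - 1) (by omega)
      have hmm : 1 + (m - 1) = m := by omega
      rw [hmm] at h1
      omega
    have he1i : e 1 ≤ i := le_trans (hee' 1 le_rfl hm) he'1i
    rcases hmem with h | h
    · exact ⟨e 1, he1i, (hb 1 le_rfl hm).1, h, ha⟩
    · refine ⟨e' 1, he'1i, (hb 1 le_rfl hm).2, h, fun k hk hki => ha k ?_ hki⟩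
      have := hee' 1 le_rfl hm
      omega
end

section
/- Let (a, τ) be a timed word, let b1, b2 be atomic propositions, let b, c ∈ ℕ with b < c, and let I ⊆ ℝ satisfy Set.Ioo (b:ℝ) c ⊆ I ⊆ Set.Icc (b:ℝ) c and 0 ∉ I. For every position i, if there exists j ≤ i with b2 ∈ a j and b1 ∈ a k for all j < k ≤ i (i.e., position i satisfies the untimed b1 S b2), then there exists a (b,c,I)-block decomposition at position i. -/
theorem untimed_since_implies_blockDecomp {P : Type*} (a : ℕ → Set P) (τ : ℕ → ℝ)
    (h0 : 0 ≤ τ 0) (hmono : ∀ n, τ n ≤ τ (n + 1))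
    (b1 b2 : P) (b c : ℕ) (hbc : b < c) (I : Set ℝ)
    (hI1 : Set.Ioo (b : ℝ) (c : ℝ) ⊆ I) (hI2 : I ⊆ Set.Icc (b : ℝ) (c : ℝ))
    (hI0 : (0 : ℝ) ∉ I) (i : ℕ)
    (hsince : ∃ j ≤ i, b2 ∈ a j ∧ ∀ k, j < k → k ≤ i → b1 ∈ a k) :
    ∃ m e e', BlockDecomp a τ b1 b2 b c I i m e e' := by
  classical
  have hτ : Monotone τ := monotone_nat_of_le_succ hmono
  have hC : (0 : ℝ) < (c : ℝ) - (b : ℝ) := by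
    have : (b : ℝ) < (c : ℝ) := by exact_mod_cast hbc
    linarith
  -- auxiliary greedy construction starting at a `b2`-position `s`
  have aux : ∀ n s, i - s ≤ n → s ≤ i → b2 ∈ a s →
      ∃ (m : ℕ) (e e' : ℕ → ℕ), e 1 = s ∧ 1 ≤ m ∧
        (∀ l, 1 ≤ l → l ≤ m → e l ≤ e' l) ∧
        (∀ l, 1 ≤ l → l < m → e' l < e (l + 1)) ∧
        (∀ l, 1 ≤ l → l ≤ m → e' l ≤ i) ∧
        (∀ l, 1 ≤ l → l ≤ m → b2 ∈ a (e l) ∧ b2 ∈ a (e' l)) ∧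
        (∀ l, 1 ≤ l → l < m → ∀ k, e' l < k → k < e (l + 1) → b2 ∉ a k) ∧
        (∀ k, e' m < k → k ≤ i → b2 ∉ a k) ∧
        (∀ l, 1 ≤ l → l ≤ m → τ (e' l) - τ (e l) < (c : ℝ) - (b : ℝ)) ∧
        (∀ l, 1 ≤ l → l < m → (c : ℝ) - (b : ℝ) ≤ τ (e (l + 1)) - τ (e l)) := by
    intro n
    induction n with
    | zero =>
      intro s hsi hsle hs
      have hseq : s = i := by omega
      refine ⟨1, fun _ => s, fun _ => s, rfl, le_refl 1, fun _ _ _ => le_refl s,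
        fun l h1 h2 => by omega, fun _ _ _ => hsle, fun _ _ _ => ⟨hs, hs⟩,
        fun l h1 h2 => by omega, fun k hk hk' => by exfalso; simp only [] at hk; omega,
        fun _ _ _ => by simpa using hC, fun l h1 h2 => by omega⟩
    | succ n ih =>
      intro s hsi hsle hs
      set Q : ℕ → Prop := fun k => s ≤ k ∧ b2 ∈ a k ∧ τ k - τ s < (c : ℝ) - (b : ℝ) with hQdef
      have hQs : Q s := ⟨le_refl s, hs, by simpa using hC⟩
      set E := Nat.findGreatest Q i with hEdef
      have hE1 : s ≤ E := Nat.le_findGreatest hsle hQs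
      have hE2 : E ≤ i := Nat.findGreatest_le i
      have hQE : Q E := Nat.findGreatest_spec hsle hQs
      by_cases h : ∃ t, E < t ∧ t ≤ i ∧ b2 ∈ a t
      · -- another block is needed
        set s' := Nat.find h with hs'def
        obtain ⟨hs'1, hs'2, hs'3⟩ := Nat.find_spec h
        have hs'min : ∀ t, t < s' → ¬(E < t ∧ t ≤ i ∧ b2 ∈ a t) := fun t ht => Nat.find_min h ht
        have hss' : s < s' := lt_of_le_of_lt hE1 hs'1
        have hgap : (c : ℝ) - (b : ℝ) ≤ τ s' - τ s := by
          by_contra hlt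
          push_neg at hlt
          exact Nat.findGreatest_is_greatest hs'1 hs'2 ⟨le_of_lt hss', hs'3, hlt⟩
        obtain ⟨m', e'', e''', he''1, hm', hstr1, hstr2, hle_i, hb2, hbetween, htail, hd, hee⟩ :=
          ih s' (by omega) hs'2 hs'3
        refine ⟨m' + 1, fun l => if l = 1 then s else e'' (l - 1),
          fun l => if l = 1 then E else e''' (l - 1), by simp, by omega,
          ?_, ?_, ?_, ?_, ?_, ?_, ?_, ?_⟩
        · intro l h1 h2
          by_cases hl : l = 1
          · simp [hl, hE1]
          · simp only [if_neg hl]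
            exact hstr1 (l - 1) (by omega) (by omega)
        · intro l h1 h2
          by_cases hl : l = 1
          · subst hl
            show E < e'' 1
            rw [he''1]
            exact hs'1
          · have h1' : l + 1 ≠ 1 := by omega
            simp only [if_neg hl, if_neg h1']
            have := hstr2 (l - 1) (by omega) (by omega)
            have heq : l - 1 + 1 = l := by omega
            rwa [heq] at this
        · intro l h1 h2
          by_cases hl : l = 1
          · simp [hl, hE2]
          · simp only [if_neg hl]
            exact hle_i (l - 1) (by omega) (by omega)
        · intro l h1 h2
          by_cases hl : l = 1
          · simpa [hl] using ⟨hs, hQE.2.1⟩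
          · simp only [if_neg hl]
            exact hb2 (l - 1) (by omega) (by omega)
        · intro l h1 h2 k hk1 hk2
          by_cases hl : l = 1
          · have h1' : l + 1 ≠ 1 := by omega
            simp only [hl, if_pos rfl] at hk1
            simp only [if_neg h1'] at hk2
            rw [hl] at hk2
            simp only [he''1] at hk2
            intro hk3
            exact hs'min k hk2 ⟨hk1, by omega, hk3⟩
          · have h1' : l + 1 ≠ 1 := by omega
            simp only [if_neg hl] at hk1
            simp only [if_neg h1'] at hk2
            have heq : l - 1 + 1 = l := by omega
            have := hbetween (l - 1) (by omega) (by omega) k hk1 (by rwa [heq])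
            exact this
        · intro k hk1 hk2
          have hne : m' + 1 ≠ 1 := by omega
          simp only [if_neg hne] at hk1
          exact htail k (by simpa using hk1) hk2
        · intro l h1 h2
          by_cases hl : l = 1
          · simpa [hl] using hQE.2.2
          · simp only [if_neg hl]
            exact hd (l - 1) (by omega) (by omega)
        · intro l h1 h2
          by_cases hl : l = 1
          · subst hl
            show (c : ℝ) - (b : ℝ) ≤ τ (e'' 1) - τ s
            rw [he''1]
            exact hgap
          · have h1' : l + 1 ≠ 1 := by omega
            simp only [if_neg hl, if_neg h1']
            have := hee (l - 1) (by omega) (by omega)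
            have heq : l - 1 + 1 = l := by omega
            rwa [heq] at this
      · -- single block suffices
        push_neg at h
        refine ⟨1, fun _ => s, fun _ => E, rfl, le_refl 1, fun _ _ _ => hE1,
          fun l h1 h2 => by omega, fun _ _ _ => hE2, fun _ _ _ => ⟨hs, hQE.2.1⟩,
          fun l h1 h2 => by omega, fun k hk1 hk2 => h k hk1 hk2,
          fun _ _ _ => hQE.2.2, fun l h1 h2 => by omega⟩
  -- main construction
  have hsince' : ∃ j, j ≤ i ∧ b2 ∈ a j ∧ ∀ k, j < k → k ≤ i → b1 ∈ a k := hsince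
  set j0 := Nat.find hsince' with hj0def
  obtain ⟨hj0i, hj0b2, hj0b1⟩ := Nat.find_spec hsince'
  have hleast : IsLeast {j | j ≤ i ∧ b2 ∈ a j ∧ ∀ k, j < k → k ≤ i → b1 ∈ a k} j0 :=
    ⟨⟨hj0i, hj0b2, hj0b1⟩, fun x hx => Nat.find_min' hsince' hx⟩
  set T : ℕ → Prop := fun s => j0 ≤ s ∧ s ≤ i ∧ b2 ∈ a s ∧
    (LB b I (τ i - τ s) ∨ s = j0) with hTdef
  have hTj0 : T j0 := ⟨le_refl j0, hj0i, hj0b2, Or.inr rfl⟩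
  set e1 := Nat.findGreatest T i with he1def
  have he1a : j0 ≤ e1 := le_trans (le_refl j0) (Nat.le_findGreatest hj0i hTj0)
  have hTe1 : T e1 := Nat.findGreatest_spec hj0i hTj0
  have he1i : e1 ≤ i := Nat.findGreatest_le i
  have hmaxT : ∀ t, e1 < t → t ≤ i → ¬T t := fun t h1 h2 =>
    Nat.findGreatest_is_greatest h1 h2
  obtain ⟨m, e, e', he1eq, hm, hstr1, hstr2, hle_i, hb2, hbetween, htail, hd, hee⟩ :=
    aux i e1 (by omega) he1i hTe1.2.2.1
  refine ⟨m, e, e', hm, hstr1, hstr2, hle_i m (by omega) (le_refl m), ?_, hb2, hbetween,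
    htail, hd, hee, ?_, ?_⟩
  · intro k hk1 hk2
    rw [he1eq] at hk1
    exact hj0b1 k (lt_of_le_of_lt he1a hk1) hk2
  · rcases hTe1.2.2.2 with hLB | hj0eq
    · left; rw [he1eq]; exact hLB
    · right; rw [he1eq, hj0eq]; exact hleast
  · intro hm1 hLB
    have h12 : e 1 ≤ e' 1 := hstr1 1 (le_refl 1) (by omega)
    have h23 : e' 1 < e 2 := hstr2 1 (le_refl 1) hm1
    have he2i : e 2 ≤ i := le_trans (hstr1 2 (by omega) hm1) (hle_i 2 (by omega) hm1)
    have hb2e2 : b2 ∈ a (e 2) := (hb2 2 (by omega) hm1).1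
    have he1lt : e1 < e 2 := by rw [← he1eq]; omega
    exact hmaxT (e 2) he1lt he2i ⟨by omega, he2i, hb2e2, Or.inl hLB⟩
end

section
/- Let (a, τ) be a timed word, let b1, b2 be atomic propositions, let b, c ∈ ℕ with b < c, and let I ⊆ ℝ satisfy Set.Ioo (b:ℝ) c ⊆ I ⊆ Set.Icc (b:ℝ) c and 0 ∉ I. Let i be a position and let m, i_1 ≤ i'_1 < … < i_m ≤ i'_m ≤ i be a (b,c,I)-block decomposition at position i. Then there exists j ≤ i with b2 ∈ a j, τ i − τ j ∈ I, and b1 ∈ a k for all j < k ≤ i, if and only if τ i − τ (i_1) ∈ I or τ i − τ (i'_1) ∈ I. -/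
theorem blockDecomp_since_iff {P : Type*} (a : ℕ → Set P) (τ : ℕ → ℝ)
    (h0 : 0 ≤ τ 0) (hmono : ∀ n, τ n ≤ τ (n + 1))
    (b1 b2 : P) (b c : ℕ) (hbc : b < c) (I : Set ℝ)
    (hI1 : Set.Ioo (b : ℝ) (c : ℝ) ⊆ I) (hI2 : I ⊆ Set.Icc (b : ℝ) (c : ℝ))
    (hI0 : (0 : ℝ) ∉ I) (i m : ℕ) (e e' : ℕ → ℕ)
    (hBD : BlockDecomp a τ b1 b2 b c I i m e e') :
    (∃ j ≤ i, b2 ∈ a j ∧ τ i - τ j ∈ I ∧ ∀ k, j < k → k ≤ i → b1 ∈ a k) ↔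
      (τ i - τ (e 1) ∈ I ∨ τ i - τ (e' 1) ∈ I) := by
  obtain ⟨hm, hee', he'e, he'mi, hA, hB, hC1, hC2, hD, hE, hF, hG⟩ := hBD
  have hτ : Monotone τ := monotone_nat_of_le_succ hmono
  have hbcR : (b : ℝ) < c := by exact_mod_cast hbc
  -- helpers
  have hmemLB : ∀ y : ℝ, LB b I y → y < (c : ℝ) → y ∈ I := by
    rintro y (⟨hbI, hby⟩ | ⟨hbI, hby⟩) hyc
    · rcases eq_or_lt_of_le hby with h | h
      · rwa [← h]
      · exact hI1 ⟨h, hyc⟩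
    · exact hI1 ⟨hby, hyc⟩
  have hmem2 : ∀ y x : ℝ, LB b I y → y ≤ x → x ∈ I → y ∈ I := by
    intro y x hLB hyx hx
    have hxc := (hI2 hx).2
    rcases lt_or_eq_of_le (hyx.trans hxc) with h | h
    · exact hmemLB _ hLB h
    · have hxy : y = x := le_antisymm hyx (by rw [h]; exact hxc)
      rwa [hxy]
  have hLBmono : ∀ y z : ℝ, LB b I y → y ≤ z → LB b I z := by
    rintro y z (⟨h1, h2⟩ | ⟨h1, h2⟩) hle
    · exact Or.inl ⟨h1, h2.trans hle⟩
    · exact Or.inr ⟨h1, lt_of_lt_of_le h2 hle⟩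
  have hLBof : ∀ x : ℝ, x ∈ I → LB b I x := by
    intro x hx
    by_cases hbI : (b : ℝ) ∈ I
    · exact Or.inl ⟨hbI, (hI2 hx).1⟩
    · exact Or.inr ⟨hbI, lt_of_le_of_ne (hI2 hx).1
        (fun h => hbI (by rw [h]; exact hx))⟩
  -- e' 1 ≤ i
  have key : ∀ d l, 1 ≤ l → l + d ≤ m → e' l ≤ e' (l + d) := by
    intro d
    induction d with
    | zero => intro l _ _; simp
    | succ d ih =>
      intro l hl hldm
      have h1 : e' l ≤ e' (l + d) := ih l hl (by omega)
      have h2 : e' (l + d) < e (l + d + 1) := he'e (l + d) (by omega) (by omega)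
      have h3 : e (l + d + 1) ≤ e' (l + d + 1) := hee' (l + d + 1) (by omega) (by omega)
      show e' l ≤ e' (l + d + 1)
      omega
  have he'1i : e' 1 ≤ i := by
    have h := key (m - 1) 1 le_rfl (by omega)
    have hh : 1 + (m - 1) = m := by omega
    rw [hh] at h
    exact h.trans he'mi
  have he1i : e 1 ≤ i := le_trans (hee' 1 le_rfl hm) he'1i
  constructor
  · rintro ⟨j, hji, hb2j, hjI, hb1j⟩
    have hLBj : LB b I (τ i - τ j) := hLBof _ hjI
    rcases le_or_gt j (e 1) with hje | hje
    · -- j ≤ e 1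
      have hLB1 : LB b I (τ i - τ (e 1)) := by
        rcases hF with h | h
        · exact h
        · have h1 : e 1 ≤ j := h.2 ⟨hji, hb2j, hb1j⟩
          have h2 : j = e 1 := le_antisymm hje h1
          rw [← h2]; exact hLBj
      exact Or.inl (hmem2 _ _ hLB1 (by linarith [hτ hje]) hjI)
    · -- e 1 < j
      rcases le_or_gt j (e' 1) with hje' | hje'
      · have hLB1 : LB b I (τ i - τ (e 1)) :=
          hLBmono _ _ hLBj (by linarith [hτ hje.le])
        rcases lt_or_ge (τ i - τ (e 1)) (c : ℝ) with hlt | hge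
        · exact Or.inl (hmemLB _ hLB1 hlt)
        · refine Or.inr ?_
          have hd1 := hD 1 le_rfl hm
          have hby : (b : ℝ) < τ i - τ (e' 1) := by linarith
          have hLB' : LB b I (τ i - τ (e' 1)) := by
            by_cases hbI : (b : ℝ) ∈ I
            · exact Or.inl ⟨hbI, hby.le⟩
            · exact Or.inr ⟨hbI, hby⟩
          exact hmem2 _ _ hLB' (by linarith [hτ hje']) hjI
      · -- e' 1 < j : contradiction
        exfalso
        have hm2 : 2 ≤ m := by
          by_contra h
          have hm1 : m = 1 := by omega
          exact hC2 j (by rw [hm1]; exact hje') hji hb2j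
        have he2j : e 2 ≤ j := by
          by_contra h
          exact hC1 1 le_rfl (by omega) j hje' (show j < e 2 by omega) hb2j
        exact hG (by omega) (hLBmono _ _ hLBj (by linarith [hτ he2j]))
  · rintro (h | h)
    · exact ⟨e 1, he1i, (hB 1 le_rfl hm).1, h, fun k hk hki => hA k hk hki⟩
    · exact ⟨e' 1, he'1i, (hB 1 le_rfl hm).2, h, fun k hk hki =>
        hA k (lt_of_le_of_lt (hee' 1 le_rfl hm) hk) hki⟩
end

section
/- Let τ : ℕ → ℝ be monotone (τ n ≤ τ (n+1) for all n), let b, c ∈ ℕ with b < c, let m ≥ 2, let i_1 < i_2 < … < i_m ≤ i be indices such that τ (i_{l+1}) − τ (i_l) ≥ c − b for all 1 ≤ l < m and τ i − τ (i_2) ≤ b. Then m ≤ 2 + b / (c − b) (natural-number division). In particular, any (b,c,I)-block decomposition has at most 2 + ⌊b/(c−b)⌋ blocks. -/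
theorem blockDecomp_bound (τ : ℕ → ℝ) (hmono : ∀ n, τ n ≤ τ (n + 1))
    (b c : ℕ) (hbc : b < c) (m : ℕ) (hm : 2 ≤ m)
    (e : ℕ → ℕ) (i : ℕ)
    (hinc : ∀ l, 1 ≤ l → l < m → e l < e (l + 1))
    (hei : e m ≤ i)
    (hgap : ∀ l, 1 ≤ l → l < m → (c : ℝ) - (b : ℝ) ≤ τ (e (l + 1)) - τ (e l))
    (hub : τ i - τ (e 2) ≤ (b : ℝ)) :
    m ≤ 2 + b / (c - b) := by
  have hτ : Monotone τ := monotone_nat_of_le_succ hmono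
  have key : ∀ k, 2 ≤ k → k ≤ m → ((k : ℝ) - 2) * ((c : ℝ) - b) ≤ τ (e k) - τ (e 2) := by
    intro k
    induction k with
    | zero => omega
    | succ n ih =>
      intro h2 hkm
      rcases Nat.lt_or_ge n 2 with hn | hn
      · have : n = 1 := by omega
        subst this
        norm_num
      · have h1 : ((n : ℝ) - 2) * ((c : ℝ) - b) ≤ τ (e n) - τ (e 2) :=
          ih hn (by omega)
        have h2' : (c : ℝ) - b ≤ τ (e (n + 1)) - τ (e n) :=
          hgap n (by omega) (by omega)
        push_cast
        nlinarith
  have hkey := key m hm le_rfl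
  have h1 : τ (e m) ≤ τ i := hτ hei
  have h2 : ((m : ℝ) - 2) * ((c : ℝ) - b) ≤ (b : ℝ) := by linarith
  have h3 : ((m - 2 : ℕ) : ℝ) * (((c - b : ℕ) : ℝ)) ≤ ((b : ℕ) : ℝ) := by
    push_cast [Nat.cast_sub hm, Nat.cast_sub hbc.le]
    linarith
  have h4 : (m - 2) * (c - b) ≤ b := by exact_mod_cast h3
  have h5 : m - 2 ≤ b / (c - b) := (Nat.le_div_iff_mul_le (by omega)).2 h4
  omega
end

section
/- Let (a, τ) be a timed word, let b1, b2 be atomic propositions, and let I ⊆ ℝ be downward closed within the nonnegative reals, i.e., for all reals x, y, if 0 ≤ x ≤ y and y ∈ I then x ∈ I. Then for every position i, position i satisfies b1 S_I b2 if and only if there exists j ≤ i such that b2 ∈ a j, b2 ∉ a k and b1 ∈ a k for all k with j < k ≤ i, and τ i − τ j ∈ I. (That is, for an upper-bound interval, the latest occurrence of b2 up to position i is a witness whenever any witness exists.) -/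
theorem since_upper_bound_latest_witness {P : Type*} (a : ℕ → Set P) (τ : ℕ → ℝ)
    (h0 : 0 ≤ τ 0) (hmono : ∀ n, τ n ≤ τ (n + 1)) (b1 b2 : P)
    (I : Set ℝ) (hI : ∀ x y : ℝ, 0 ≤ x → x ≤ y → y ∈ I → x ∈ I) (i : ℕ) :
    (∃ j ≤ i, b2 ∈ a j ∧ τ i - τ j ∈ I ∧ ∀ k, j < k → k ≤ i → b1 ∈ a k) ↔
      (∃ j ≤ i, b2 ∈ a j ∧ (∀ k, j < k → k ≤ i → b2 ∉ a k ∧ b1 ∈ a k) ∧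
        τ i - τ j ∈ I) := by
  have hτmono : Monotone τ := monotone_nat_of_le_succ hmono
  constructor
  · rintro ⟨j, hj, hb2, hτ, hb1⟩
    classical
    set j' := Nat.findGreatest (fun k => j ≤ k ∧ b2 ∈ a k) i with hj'def
    have hex : (fun k => j ≤ k ∧ b2 ∈ a k) j := ⟨le_refl j, hb2⟩
    have hle : j ≤ j' := Nat.le_findGreatest hj hex
    have hj'i : j' ≤ i := Nat.findGreatest_le i
    have hspec : j ≤ j' ∧ b2 ∈ a j' :=
      Nat.findGreatest_spec (P := fun k => j ≤ k ∧ b2 ∈ a k) hj hex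
    refine ⟨j', hj'i, hspec.2, ?_, ?_⟩
    · intro k hk hki
      constructor
      · intro hb2k
        exact absurd ⟨le_trans hle (le_of_lt hk), hb2k⟩
          (Nat.findGreatest_is_greatest hk hki)
      · exact hb1 k (lt_of_le_of_lt hle hk) hki
    · exact hI _ _ (sub_nonneg.mpr (hτmono hj'i))
        (by linarith [hτmono hle]) hτ
  · rintro ⟨j, hj, hb2, hk, hτ⟩
    exact ⟨j, hj, hb2, hτ, fun k h1 h2 => (hk k h1 h2).2⟩
end

section
/- Let (a, τ) be a timed word, let b1, b2 be atomic propositions, and let I ⊆ ℝ be upward closed, i.e., for all reals x, y, if x ∈ I and x ≤ y then y ∈ I. Then for every position i, position i satisfies b1 S_I b2 if and only if there exists j ≤ i such that: b2 ∈ a j and b1 ∈ a k for all k with j < k ≤ i; for every j' < j it is not the case that (b2 ∈ a j' and b1 ∈ a k for all k with j' < k ≤ i); and τ i − τ j ∈ I. (That is, for a lower-bound interval, the earliest witness of the untimed since is a witness whenever any witness exists.) -/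
theorem since_lower_bound_earliest_witness {P : Type*} (a : ℕ → Set P) (τ : ℕ → ℝ)
    (h0 : 0 ≤ τ 0) (hmono : ∀ n, τ n ≤ τ (n + 1)) (b1 b2 : P)
    (I : Set ℝ) (hI : ∀ x y : ℝ, x ∈ I → x ≤ y → y ∈ I) (i : ℕ) :
    (∃ j ≤ i, b2 ∈ a j ∧ τ i - τ j ∈ I ∧ ∀ k, j < k → k ≤ i → b1 ∈ a k) ↔
      (∃ j ≤ i, (b2 ∈ a j ∧ ∀ k, j < k → k ≤ i → b1 ∈ a k) ∧
        (∀ j' < j, ¬ (b2 ∈ a j' ∧ ∀ k, j' < k → k ≤ i → b1 ∈ a k)) ∧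
        τ i - τ j ∈ I) := by
  have hτ : Monotone τ := monotone_nat_of_le_succ hmono
  constructor
  · rintro ⟨j, hj, hb2, hIm, hall⟩
    have hex : ∃ m, b2 ∈ a m ∧ ∀ k, m < k → k ≤ i → b1 ∈ a k := ⟨j, hb2, hall⟩
    classical
    set m := Nat.find hex with hm
    have hmspec := Nat.find_spec hex
    have hmle : m ≤ j := Nat.find_le ⟨hb2, hall⟩
    refine ⟨m, hmle.trans hj, hmspec, ?_, ?_⟩
    · intro j' hj' h
      exact Nat.find_min hex hj' h
    · exact hI _ _ hIm (by linarith [hτ hmle])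
  · rintro ⟨j, hj, ⟨hb2, hall⟩, _, hIm⟩
    exact ⟨j, hj, hb2, hIm, hall⟩
end

section
/- Let (a, τ) be a timed word and b1, b2 atomic propositions. Define s : ℕ → Bool by s 0 = false and s (i+1) = true iff b2 ∈ a i or (b1 ∈ a i and s i = true), and define r : ℕ → ℕ by r 0 = 0 and r (i+1) = i if (b2 ∈ a i and (s i = false or b1 ∉ a i)), and r (i+1) = r i otherwise. Then for every i, if s (i+1) = true, then r (i+1) is the least j ≤ i such that b2 ∈ a j and b1 ∈ a k for all k with j < k ≤ i (i.e., r tracks the earliest witness of the untimed since b1 S b2). -/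
theorem earliest_witness_tracker_correct {P : Type*} (a : ℕ → Set P) (τ : ℕ → ℝ)
    (h0 : 0 ≤ τ 0) (hmono : ∀ n, τ n ≤ τ (n + 1)) (b1 b2 : P)
    (s : ℕ → Bool) (hs0 : s 0 = false)
    (hs : ∀ i, s (i + 1) = true ↔ (b2 ∈ a i ∨ (b1 ∈ a i ∧ s i = true)))
    (r : ℕ → ℕ) (hr0 : r 0 = 0)
    (hr1 : ∀ i, (b2 ∈ a i ∧ (s i = false ∨ b1 ∉ a i)) → r (i + 1) = i)
    (hr2 : ∀ i, ¬ (b2 ∈ a i ∧ (s i = false ∨ b1 ∉ a i)) → r (i + 1) = r i) :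
    ∀ i, s (i + 1) = true →
      IsLeast {j | j ≤ i ∧ b2 ∈ a j ∧ ∀ k, j < k → k ≤ i → b1 ∈ a k} (r (i + 1)) := by
  have scomp : ∀ i j, j ≤ i → b2 ∈ a j → (∀ k, j < k → k ≤ i → b1 ∈ a k) →
      s (i + 1) = true := by
    intro i
    induction i with
    | zero =>
      intro j hj hb2 _
      interval_cases j
      rw [hs]; exact Or.inl hb2
    | succ n ih =>
      intro j hj hb2 hk
      rcases Nat.lt_or_ge j (n + 1) with h | h
      · have hj' : j ≤ n := Nat.lt_succ_iff.mp h
        rw [hs]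
        exact Or.inr ⟨hk (n + 1) (Nat.lt_succ_of_le hj') le_rfl,
          ih j hj' hb2 (fun k h1 h2 => hk k h1 (le_trans h2 (Nat.le_succ n)))⟩
      · have : j = n + 1 := le_antisymm hj h
        subst this
        rw [hs]; exact Or.inl hb2
  intro i
  induction i with
  | zero =>
    intro hsi
    have hb2 : b2 ∈ a 0 := by
      rcases (hs 0).mp hsi with h | h
      · exact h
      · rw [hs0] at h; simp at h
    rw [hr1 0 ⟨hb2, Or.inl hs0⟩]
    constructor
    · exact ⟨le_rfl, hb2, fun k h1 h2 => absurd (lt_of_lt_of_le h1 h2) (lt_irrefl 0)⟩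
    · intro j _; exact Nat.zero_le j
  | succ n ih =>
    intro hsi
    by_cases hc : b2 ∈ a (n + 1) ∧ (s (n + 1) = false ∨ b1 ∉ a (n + 1))
    · rw [hr1 _ hc]
      constructor
      · exact ⟨le_rfl, hc.1, fun k h1 h2 => absurd (lt_of_lt_of_le h1 h2) (lt_irrefl _)⟩
      · intro j hj
        by_contra hlt
        push_neg at hlt
        have hj' : j ≤ n := Nat.lt_succ_iff.mp hlt
        have hstrue : s (n + 1) = true :=
          scomp n j hj' hj.2.1 (fun k h1 h2 => hj.2.2 k h1 (le_trans h2 (Nat.le_succ n)))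
        have hb1 : b1 ∈ a (n + 1) := hj.2.2 (n + 1) (Nat.lt_succ_of_le hj') le_rfl
        rcases hc.2 with h | h
        · rw [hstrue] at h; exact absurd h (by simp)
        · exact h hb1
    · rw [hr2 _ hc]
      push_neg at hc
      have key : s (n + 1) = true ∧ b1 ∈ a (n + 1) := by
        rcases (hs (n + 1)).mp hsi with h | h
        · exact ⟨by simpa using (hc h).1, (hc h).2⟩
        · exact ⟨h.2, h.1⟩
      obtain ⟨⟨hle, hb2r, hk⟩, hlb⟩ := ih key.1
      constructor
      · refine ⟨le_trans hle (Nat.le_succ n), hb2r, fun k h1 h2 => ?_⟩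
        rcases Nat.lt_or_ge k (n + 1) with h | h
        · exact hk k h1 (Nat.lt_succ_iff.mp h)
        · have : k = n + 1 := le_antisymm h2 h
          subst this; exact key.2
      · intro j hj
        rcases Nat.lt_or_ge j (n + 1) with h | h
        · exact hlb ⟨Nat.lt_succ_iff.mp h, hj.2.1,
            fun k h1 h2 => hj.2.2 k h1 (le_trans h2 (Nat.le_succ n))⟩
        · exact le_trans (le_trans hle (Nat.le_succ n)) h
end

section
/- Let (a, τ) be a timed word, let b1, b2 be atomic propositions, and let I ⊆ ℝ be downward closed within the nonnegative reals, i.e., for all reals x, y, if 0 ≤ x ≤ y and y ∈ I then x ∈ I. Then for every position i, position i satisfies b1 U_I b2 if and only if there exists j ≥ i such that b2 ∈ a j, b2 ∉ a k and b1 ∈ a k for all k with i ≤ k < j, and τ j − τ i ∈ I. (That is, for an upper-bound interval, the first occurrence of b2 at or after position i is a witness whenever any witness exists.) -/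
theorem until_upper_bound_first_witness {P : Type*} (a : ℕ → Set P) (τ : ℕ → ℝ)
    (h0 : 0 ≤ τ 0) (hmono : ∀ n, τ n ≤ τ (n + 1)) (b1 b2 : P)
    (I : Set ℝ) (hI : ∀ x y : ℝ, 0 ≤ x → x ≤ y → y ∈ I → x ∈ I) (i : ℕ) :
    (∃ j, i ≤ j ∧ b2 ∈ a j ∧ τ j - τ i ∈ I ∧ ∀ k, i ≤ k → k < j → b1 ∈ a k) ↔
      (∃ j, i ≤ j ∧ b2 ∈ a j ∧ (∀ k, i ≤ k → k < j → b2 ∉ a k ∧ b1 ∈ a k) ∧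
        τ j - τ i ∈ I) := by
  have hτmono : Monotone τ := monotone_nat_of_le_succ hmono
  constructor
  · rintro ⟨j, hij, hb2, hτ, hb1⟩
    have hex : ∃ m, i ≤ m ∧ m ≤ j ∧ b2 ∈ a m := ⟨j, hij, le_rfl, hb2⟩
    classical
    let m := Nat.find hex
    obtain ⟨him, hmj, hb2m⟩ := Nat.find_spec hex
    refine ⟨m, him, hb2m, ?_, ?_⟩
    · intro k hik hkm
      refine ⟨fun hb2k => ?_, hb1 k hik (lt_of_lt_of_le hkm hmj)⟩
      exact Nat.find_min hex hkm ⟨hik, le_of_lt (lt_of_lt_of_le hkm hmj), hb2k⟩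
    · exact hI _ _ (by simpa using hτmono him) (by simpa using hτmono hmj) hτ
  · rintro ⟨j, hij, hb2, hk, hτ⟩
    exact ⟨j, hij, hb2, hτ, fun k h1 h2 => (hk k h1 h2).2⟩
end

section
/- Let (a, τ) be a non-Zeno timed word (the sequence τ tends to infinity), let b1, b2 be atomic propositions, and let I ⊆ ℝ be nonempty and upward closed, i.e., for all reals x, y, if x ∈ I and x ≤ y then y ∈ I. For a position i, let W := {j : i ≤ j ∧ b2 ∈ a j ∧ ∀ k, i ≤ k → k < j → b1 ∈ a k} be the set of witnesses of the untimed until at i. Then position i satisfies b1 U_I b2 if and only if W is nonempty and either W is infinite, or the greatest element j of W satisfies τ j − τ i ∈ I. -/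
theorem until_lower_bound_last_witness {P : Type*} (a : ℕ → Set P) (τ : ℕ → ℝ)
    (h0 : 0 ≤ τ 0) (hmono : ∀ n, τ n ≤ τ (n + 1))
    (hnz : Filter.Tendsto τ Filter.atTop Filter.atTop) (b1 b2 : P)
    (I : Set ℝ) (hIne : I.Nonempty) (hIup : ∀ x y : ℝ, x ∈ I → x ≤ y → y ∈ I)
    (i : ℕ) :
    (∃ j, i ≤ j ∧ b2 ∈ a j ∧ τ j - τ i ∈ I ∧ ∀ k, i ≤ k → k < j → b1 ∈ a k) ↔
      (({j | i ≤ j ∧ b2 ∈ a j ∧ ∀ k, i ≤ k → k < j → b1 ∈ a k} : Set ℕ).Nonempty ∧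
        (({j | i ≤ j ∧ b2 ∈ a j ∧ ∀ k, i ≤ k → k < j → b1 ∈ a k} : Set ℕ).Infinite ∨
          ∃ j, IsGreatest {j | i ≤ j ∧ b2 ∈ a j ∧ ∀ k, i ≤ k → k < j → b1 ∈ a k} j ∧
            τ j - τ i ∈ I)) := by
  have hτmono : Monotone τ := monotone_nat_of_le_succ hmono
  set W : Set ℕ := {j | i ≤ j ∧ b2 ∈ a j ∧ ∀ k, i ≤ k → k < j → b1 ∈ a k} with hW
  constructor
  · rintro ⟨j, hij, hb2, hI, hfill⟩
    have hjW : j ∈ W := ⟨hij, hb2, hfill⟩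
    refine ⟨⟨j, hjW⟩, ?_⟩
    by_cases hfin : W.Finite
    · right
      have hg : IsGreatest W (sSup W) :=
        ⟨Set.Nonempty.csSup_mem ⟨j, hjW⟩ hfin, fun x hx => le_csSup hfin.bddAbove hx⟩
      refine ⟨sSup W, hg, hIup _ _ hI ?_⟩
      have := hτmono (hg.2 hjW)
      linarith
    · exact Or.inl (hfin)
  · rintro ⟨⟨j0, hj0⟩, hinf | ⟨j, hjg, hjI⟩⟩
    · obtain ⟨x, hx⟩ := hIne
      obtain ⟨N, hN⟩ := (hnz.eventually_ge_atTop (x + τ i)).exists_forall_of_atTop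
      obtain ⟨j, hjW, hjN⟩ := hinf.exists_gt N
      refine ⟨j, hjW.1, hjW.2.1, hIup x _ hx ?_, hjW.2.2⟩
      have := hN j hjN.le
      linarith
    · exact ⟨j, hjg.1.1, hjg.1.2.1, hjI, hjg.1.2.2⟩
end

section
/- Let (a, τ) be a timed word, let b1, b2 be atomic propositions, and let I ⊆ ℝ be a nonempty order-connected set (Set.OrdConnected). Write x < I for (∀ y ∈ I, x < y). Define s : ℕ → Fin 3 (states named 1, 2, 3) recursively by: s 0 = state 1; if s i = state 1 then s (i+1) = state 2 when b2 ∈ a i and τ i − τ 0 ∈ I, s (i+1) = state 1 when b1 ∈ a i and ((τ i − τ 0) < I or ((τ i − τ 0) ∈ I and b2 ∉ a i)), and s (i+1) = state 3 otherwise; if s i ≠ state 1 then s (i+1) = s i. Then (there exists j with b2 ∈ a j, τ j − τ 0 ∈ I, and b1 ∈ a k for all k < j) if and only if (there exists i ≥ 1 such that s k = state 2 for all k ≥ i). (Correctness of the deterministic initial-satisfiability automaton for b1 U_I b2.) -/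
/-- `x < I`: `x` is smaller than every element of `I`. -/
def ltSet (x : ℝ) (I : Set ℝ) : Prop := ∀ y ∈ I, x < y

theorem isat_until_automaton_correct {P : Type*} (a : ℕ → Set P) (τ : ℕ → ℝ)
    (h0 : 0 ≤ τ 0) (hmono : ∀ n, τ n ≤ τ (n + 1)) (b1 b2 : P)
    (I : Set ℝ) (hIne : I.Nonempty) (hIconn : I.OrdConnected)
    -- states: `0 : Fin 3` is state 1, `1 : Fin 3` is state 2, `2 : Fin 3` is state 3
    (s : ℕ → Fin 3) (hs0 : s 0 = 0)
    (htr2 : ∀ i, s i = 0 → (b2 ∈ a i ∧ τ i - τ 0 ∈ I) → s (i + 1) = 1)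
    (htr1 : ∀ i, s i = 0 →
      (b1 ∈ a i ∧ (ltSet (τ i - τ 0) I ∨ (τ i - τ 0 ∈ I ∧ b2 ∉ a i))) →
      s (i + 1) = 0)
    (htr3 : ∀ i, s i = 0 →
      ¬ (b2 ∈ a i ∧ τ i - τ 0 ∈ I) →
      ¬ (b1 ∈ a i ∧ (ltSet (τ i - τ 0) I ∨ (τ i - τ 0 ∈ I ∧ b2 ∉ a i))) →
      s (i + 1) = 2)
    (hstay : ∀ i, s i ≠ 0 → s (i + 1) = s i) :
    (∃ j, b2 ∈ a j ∧ τ j - τ 0 ∈ I ∧ ∀ k < j, b1 ∈ a k) ↔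
      (∃ i, 1 ≤ i ∧ ∀ k, i ≤ k → s k = 1) := by
  classical
  have τmono : Monotone τ := monotone_nat_of_le_succ hmono
  -- once nonzero, stays constant
  have stay : ∀ n m, n ≤ m → s n ≠ 0 → s m = s n := by
    intro n m hnm hne
    induction m with
    | zero => rw [Nat.le_zero.mp hnm]
    | succ m ih =>
      rcases Nat.lt_or_ge n (m+1) with h | h
      · have hm : s m = s n := ih (by omega)
        rw [hstay m (by rw [hm]; exact hne), hm]
      · have : n = m + 1 := by omega
        rw [this]
  constructor
  · rintro ⟨j0, hj0⟩
    have hex : ∃ j, b2 ∈ a j ∧ τ j - τ 0 ∈ I ∧ ∀ k < j, b1 ∈ a k := ⟨j0, hj0⟩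
    set j := Nat.find hex with hjdef
    obtain ⟨hb2, hIj, hb1⟩ := Nat.find_spec hex
    have hzero : ∀ k ≤ j, s k = 0 := by
      intro k hk
      induction k with
      | zero => exact hs0
      | succ k ih =>
        have hk' : k < j := by omega
        have hsk : s k = 0 := ih (by omega)
        apply htr1 k hsk
        refine ⟨hb1 k hk', ?_⟩
        by_cases hIk : τ k - τ 0 ∈ I
        · right
          refine ⟨hIk, fun hb2k => ?_⟩
          exact absurd ⟨hb2k, hIk, fun k' hk' => hb1 k' (by omega)⟩
            (Nat.find_min hex hk')
        · left
          intro y hy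
          by_contra hlt
          push_neg at hlt
          exact hIk (hIconn.out hy hIj ⟨hlt, by linarith [τmono hk'.le]⟩)
    have h1 : s (j + 1) = 1 := htr2 j (hzero j le_rfl) ⟨hb2, hIj⟩
    exact ⟨j + 1, by omega, fun k hk => by rw [stay (j+1) k hk (by rw [h1]; decide), h1]⟩
  · rintro ⟨i, hi1, hall⟩
    have hexn : ∃ n, s n ≠ 0 := ⟨i, by rw [hall i le_rfl]; decide⟩
    set n := Nat.find hexn with hndef
    have hne : s n ≠ 0 := Nat.find_spec hexn
    have hn1 : 1 ≤ n := by
      rcases Nat.eq_zero_or_pos n with h | h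
      · exact absurd (h ▸ hs0) hne
      · exact h
    have hmin : ∀ k < n, s k = 0 := fun k hk => by
      by_contra h
      have hle : n ≤ k := Nat.find_le h
      omega
    have hsn1 : s n = 1 := by
      have := stay n (max n i) (le_max_left _ _) hne
      rw [hall _ (le_max_right _ _)] at this
      exact this.symm
    have hprev : s (n - 1) = 0 := hmin _ (by omega)
    have heq : n - 1 + 1 = n := by omega
    have hcond2 : b2 ∈ a (n-1) ∧ τ (n-1) - τ 0 ∈ I := by
      by_contra hc
      by_cases hc1 : b1 ∈ a (n-1) ∧ (ltSet (τ (n-1) - τ 0) I ∨ (τ (n-1) - τ 0 ∈ I ∧ b2 ∉ a (n-1)))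
      · have := htr1 (n-1) hprev hc1
        rw [heq, hsn1] at this
        exact absurd this (by decide)
      · have := htr3 (n-1) hprev hc hc1
        rw [heq, hsn1] at this
        exact absurd this (by decide)
    refine ⟨n - 1, hcond2.1, hcond2.2, fun k hk => ?_⟩
    have hsk : s k = 0 := hmin k (show k < n by omega)
    have hsk1 : s (k + 1) = 0 := hmin (k+1) (show k + 1 < n by omega)
    by_contra hb1k
    by_cases hc2 : b2 ∈ a k ∧ τ k - τ 0 ∈ I
    · have := htr2 k hsk hc2
      rw [hsk1] at this
      exact absurd this (by decide)
    · have := htr3 k hsk hc2 (fun h => hb1k h.1)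
      rw [hsk1] at this
      exact absurd this (by decide)
end

section
/- Let (a, τ) be a timed word and q an atomic proposition. For every position i, the following are equivalent: (1) there exists j < i with q ∈ a j and τ i − τ j < 2 (i.e., some event strictly in the past, less than 2 time units ago, satisfies q); (2) either there exists j ≤ i with q ∈ a j and τ i − τ j ∈ Set.Ioo 0 2, or i ≥ 1, τ i − τ (i−1) = 0, and there exists j ≤ i − 1 with q ∈ a j and τ (i−1) − τ j = 0. (Rewriting of YP_{<2} q as P_{(0,2)} q ∨ Y_{[0,0]} P_{[0,0]} q in the pointwise semantics.) -/
theorem YP_lt_two_rewrite {P : Type*} (a : ℕ → Set P) (τ : ℕ → ℝ)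
    (h0 : 0 ≤ τ 0) (hmono : ∀ n, τ n ≤ τ (n + 1)) (q : P) (i : ℕ) :
    (∃ j < i, q ∈ a j ∧ τ i - τ j < 2) ↔
      ((∃ j ≤ i, q ∈ a j ∧ τ i - τ j ∈ Set.Ioo (0 : ℝ) 2) ∨
        (1 ≤ i ∧ τ i - τ (i - 1) = 0 ∧
          ∃ j ≤ i - 1, q ∈ a j ∧ τ (i - 1) - τ j = 0)) := by
  have hm : Monotone τ := monotone_nat_of_le_succ hmono
  constructor
  · rintro ⟨j, hj, hq, hlt⟩
    have hji : j ≤ i := hj.le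
    have hnn : τ j ≤ τ i := hm hji
    rcases lt_or_eq_of_le hnn with hpos | heq
    · exact Or.inl ⟨j, hji, hq, by constructor <;> linarith⟩
    · have hi1 : 1 ≤ i := Nat.one_le_iff_ne_zero.mpr (by omega)
      have hj1 : j ≤ i - 1 := by omega
      have h1 : τ j ≤ τ (i - 1) := hm hj1
      have h2 : τ (i - 1) ≤ τ i := hm (by omega)
      exact Or.inr ⟨hi1, by linarith, j, hj1, hq, by linarith⟩
  · rintro (⟨j, hj, hq, hpos, hlt⟩ | ⟨hi1, heq, j, hj, hq, heq2⟩)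
    · refine ⟨j, ?_, hq, hlt⟩
      rcases lt_or_eq_of_le hj with h | h
      · exact h
      · exfalso; rw [h] at hpos; linarith
    · refine ⟨j, by omega, hq, ?_⟩
      have h2 : τ (i - 1) ≤ τ i := hm (by omega)
      linarith
end
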